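/- arXiv:1706.07193 — 5 statements merged into one kernel-verified Lean document; each statement's English description precedes it below -/
import Mathlib

section
/- Let X be a complete separable metric space, and let {ν_n} and {θ_n} be sequences of Borel probability measures on X such that sup_n D_KL(θ_n ‖ ν_n) < ∞ and ν_n converges weakly to some probability measure ν. Then the sequence {θ_n} is tight (hence weakly pre-compact). -/
/-! A bound `∫ llr P Q ∂P ≤ M` makes `P` uniformly absolutely continuous with respect to `Q`.
Split a set `A` along `{llr P Q ≤ L}`: the first part has `P`-mass at most `exp L * Q A`, and the
rest has `P`-mass at most `(M + 1) / L` by a Markov-type estimate, since `t log t ≥ -1` keeps the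
negative part of `llr P Q` from integrating below `-1`. So the tightness of the weakly convergent
sequence `ν n` (the converse half of Prokhorov's theorem) transfers to `θ n`. -/

open MeasureTheory Filter Topology Classical
open scoped ENNReal

/-- Kullback–Leibler divergence, `⊤` when absolute continuity or integrability fails. -/

noncomputable def klDiv {X : Type*} [MeasurableSpace X] (P Q : Measure X) : EReal :=
  if P ≪ Q ∧ Integrable (llr P Q) P then ((∫ x, llr P Q x ∂P : ℝ) : EReal) else ⊤

lemma Real.neg_one_le_mul_log {t : ℝ} (ht : 0 ≤ t) : -1 ≤ t * Real.log t := by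
  have := InformationTheory.klFun_nonneg ht
  rw [InformationTheory.klFun_apply] at this
  linarith

section ChangeOfMeasure

variable {X : Type*} [MeasurableSpace X] {P Q : Measure X}

lemma neg_measureReal_univ_le_setIntegral_llr [SigmaFinite P] [IsFiniteMeasure Q] (hPQ : P ≪ Q)
    {B : Set X} (hB : MeasurableSet B) : -Q.real Set.univ ≤ ∫ x in B, llr P Q x ∂P := by
  rw [← integral_indicator hB, ← integral_rnDeriv_smul hPQ]
  by_cases hint : Integrable (fun x ↦ (P.rnDeriv Q x).toReal • B.indicator (llr P Q) x) Q
  · calc -Q.real Set.univ = ∫ _, (-1 : ℝ) ∂Q := by simp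
      _ ≤ _ := integral_mono (integrable_const _) hint fun x ↦ by
        by_cases hx : x ∈ B
        · simpa [hx, llr] using Real.neg_one_le_mul_log ENNReal.toReal_nonneg
        · simp [hx]
  · rw [integral_undef hint, neg_nonpos]
    exact measureReal_nonneg

lemma mul_measureReal_setOf_lt_llr_le [IsFiniteMeasure P] [IsFiniteMeasure Q] (hPQ : P ≪ Q)
    (hint : Integrable (llr P Q) P) (L : ℝ) :
    L * P.real {x | L < llr P Q x} ≤ ∫ x, llr P Q x ∂P + Q.real Set.univ := by
  set S := {x | L < llr P Q x}
  have hS : MeasurableSet S := measurableSet_lt measurable_const (measurable_llr P Q)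
  have hon : L * P.real S ≤ ∫ x in S, llr P Q x ∂P := by
    rw [mul_comm, ← smul_eq_mul, ← setIntegral_const]
    exact setIntegral_mono_on (integrableOn_const (measure_ne_top _ _)) hint.integrableOn hS
      fun x hx ↦ hx.le
  have hcompl := neg_measureReal_univ_le_setIntegral_llr hPQ hS.compl
  linarith [integral_add_compl hS hint]

lemma measure_inter_setOf_llr_le_le [SigmaFinite P] [P.HaveLebesgueDecomposition Q]
    (hPQ : P ≪ Q) {A : Set X} (hA : MeasurableSet A) (L : ℝ) :
    P (A ∩ {x | llr P Q x ≤ L}) ≤ ENNReal.ofReal (Real.exp L) * Q A := by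
  have hT : MeasurableSet (A ∩ {x | llr P Q x ≤ L}) :=
    hA.inter (measurableSet_le (measurable_llr P Q) measurable_const)
  have hdensity : ∀ᵐ x ∂Q, x ∈ A ∩ {x | llr P Q x ≤ L} →
      P.rnDeriv Q x ≤ ENNReal.ofReal (Real.exp L) := by
    filter_upwards [Measure.rnDeriv_lt_top P Q] with x hfin hx
    rw [← ENNReal.ofReal_toReal hfin.ne]
    refine ENNReal.ofReal_le_ofReal ?_
    rcases ENNReal.toReal_nonneg.eq_or_lt with hzero | hpos
    · rw [← hzero]; positivity
    · exact (Real.log_le_iff_le_exp hpos).mp hx.2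
  calc P (A ∩ {x | llr P Q x ≤ L})
      = ∫⁻ x in A ∩ {x | llr P Q x ≤ L}, P.rnDeriv Q x ∂Q := by
        rw [← withDensity_apply _ hT, Measure.withDensity_rnDeriv_eq P Q hPQ]
    _ ≤ ∫⁻ _ in A ∩ {x | llr P Q x ≤ L}, ENNReal.ofReal (Real.exp L) ∂Q :=
        setLIntegral_mono_ae aemeasurable_const hdensity
    _ ≤ ENNReal.ofReal (Real.exp L) * Q A := by
        rw [setLIntegral_const]
        exact mul_le_mul_right (measure_mono Set.inter_subset_left) _

lemma measure_le_exp_mul_add_integral_llr_div [IsFiniteMeasure P] [IsFiniteMeasure Q]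
    (hPQ : P ≪ Q) (hint : Integrable (llr P Q) P) {A : Set X} (hA : MeasurableSet A) {L : ℝ}
    (hL : 0 < L) :
    P A ≤ ENNReal.ofReal (Real.exp L) * Q A
      + ENNReal.ofReal ((∫ x, llr P Q x ∂P + Q.real Set.univ) / L) := by
  have htail : P {x | L < llr P Q x} ≤
      ENNReal.ofReal ((∫ x, llr P Q x ∂P + Q.real Set.univ) / L) := by
    rw [← ofReal_measureReal (measure_ne_top _ _)]
    refine ENNReal.ofReal_le_ofReal ((le_div_iff₀' hL).mpr ?_)
    exact mul_measureReal_setOf_lt_llr_le hPQ hint L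
  calc P A ≤ P (A ∩ {x | llr P Q x ≤ L}) + P {x | L < llr P Q x} := by
        refine (measure_le_inter_add_sdiff P A {x | llr P Q x ≤ L}).trans (add_le_add le_rfl ?_)
        exact measure_mono fun x hx ↦ Set.mem_ofPred.mpr (not_le.mp hx.2)
    _ ≤ _ := add_le_add (measure_inter_setOf_llr_le_le hPQ hA L) htail

lemma exists_pos_forall_measure_le_of_integral_llr_le (M : ℝ) {ε : ℝ≥0∞} (hε : 0 < ε) :
    ∃ δ > 0, ∀ (P Q : Measure X) [IsProbabilityMeasure P] [IsProbabilityMeasure Q],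
      P ≪ Q → Integrable (llr P Q) P → ∫ x, llr P Q x ∂P ≤ M →
      ∀ A, MeasurableSet A → Q A ≤ δ → P A ≤ ε := by
  have hdecay : Tendsto (fun L : ℝ ↦ ENNReal.ofReal ((M + 1) / L)) atTop (𝓝 0) := by
    simpa using ENNReal.tendsto_ofReal (tendsto_const_nhds.div_atTop tendsto_id)
  obtain ⟨L, hL, hLε⟩ := ((eventually_gt_atTop 0).and
    (hdecay.eventually (gt_mem_nhds (ENNReal.half_pos hε.ne')))).exists
  refine ⟨ε / 2 / ENNReal.ofReal (Real.exp L), ENNReal.div_pos (ENNReal.half_pos hε.ne').ne'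
    ENNReal.ofReal_ne_top, fun P Q _ _ hPQ hint hM A hA hQA ↦ ?_⟩
  calc P A ≤ ENNReal.ofReal (Real.exp L) * Q A
        + ENNReal.ofReal ((∫ x, llr P Q x ∂P + Q.real Set.univ) / L) :=
        measure_le_exp_mul_add_integral_llr_div hPQ hint hA hL
    _ ≤ ε / 2 + ε / 2 := by
        gcongr
        · exact (mul_le_mul_right hQA _).trans ENNReal.mul_div_le
        · refine le_trans (ENNReal.ofReal_le_ofReal ?_) hLε.le
          simpa using div_le_div_of_nonneg_right (by simpa using hM) hL.le
    _ = ε := ENNReal.add_halves ε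

end ChangeOfMeasure

lemma klDiv_le_coe_iff {X : Type*} [MeasurableSpace X] {P Q : Measure X} {M : ℝ} :
    klDiv P Q ≤ M ↔ P ≪ Q ∧ Integrable (llr P Q) P ∧ ∫ x, llr P Q x ∂P ≤ M := by
  unfold klDiv
  split_ifs with h
  · simp [h]
  · simp only [top_le_iff, EReal.coe_ne_top, false_iff]
    tauto

theorem isTightMeasureSet_range_of_klDiv_le {X ι : Type*} [TopologicalSpace X] [T2Space X]
    [MeasurableSpace X] [OpensMeasurableSpace X] (θ ν : ι → Measure X)
    [∀ i, IsProbabilityMeasure (θ i)] [∀ i, IsProbabilityMeasure (ν i)]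
    (hν : IsTightMeasureSet (Set.range ν)) {M : ℝ} (hKL : ∀ i, klDiv (θ i) (ν i) ≤ M) :
    IsTightMeasureSet (Set.range θ) := by
  rw [isTightMeasureSet_iff_exists_isCompact_measure_compl_le] at hν ⊢
  intro ε hε
  obtain ⟨δ, hδ, habs⟩ := exists_pos_forall_measure_le_of_integral_llr_le (X := X) M hε
  obtain ⟨K, hK, hKν⟩ := hν δ hδ
  refine ⟨K, hK, Set.forall_mem_range.mpr fun i ↦ ?_⟩
  obtain ⟨hac, hint, hM⟩ := klDiv_le_coe_iff.mp (hKL i)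
  exact habs _ _ hac hint hM _ hK.measurableSet.compl (hKν _ ⟨i, rfl⟩)

lemma isTightMeasureSet_range_of_tendsto {X : Type*} [PseudoMetricSpace X] [CompleteSpace X]
    [SecondCountableTopology X] [MeasurableSpace X] [OpensMeasurableSpace X]
    {μ : ℕ → ProbabilityMeasure X} {μ₀ : ProbabilityMeasure X} (h : Tendsto μ atTop (𝓝 μ₀)) :
    IsTightMeasureSet (Set.range fun n ↦ (μ n : Measure X)) := by
  refine (isTightMeasureSet_of_isCompact_closure h.isCompact_insert_range.closure).subset ?_
  rintro _ ⟨n, rfl⟩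
  exact ⟨μ n, Set.mem_insert_of_mem _ (Set.mem_range_self n), rfl⟩

/-- If `sup_n D_KL(θ_n ‖ ν_n) < ∞` and `ν_n → ν` weakly on a complete separable metric
space, then the family `{θ_n}` is tight. -/
theorem tightness_from_bounded_KL_and_weak_convergence
    {X : Type*} [MetricSpace X] [CompleteSpace X] [TopologicalSpace.SeparableSpace X]
    [MeasurableSpace X] [BorelSpace X]
    (ν θ : ℕ → ProbabilityMeasure X) (νlim : ProbabilityMeasure X)
    (hKL : (⨆ n, klDiv (θ n : Measure X) (ν n : Measure X)) < ⊤)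
    (hconv : Tendsto ν atTop (𝓝 νlim)) :
    ∀ ε : ℝ≥0∞, 0 < ε → ∃ K : Set X, IsCompact K ∧ ∀ n, (θ n : Measure X) Kᶜ ≤ ε := by
  obtain ⟨M, hM, -⟩ := EReal.lt_iff_exists_real_btwn.mp hKL
  have hθ := isTightMeasureSet_range_of_klDiv_le (fun n ↦ (θ n : Measure X))
    (fun n ↦ (ν n : Measure X)) (isTightMeasureSet_range_of_tendsto hconv)
    fun n ↦ ((le_iSup (fun n ↦ klDiv (θ n : Measure X) (ν n : Measure X)) n).trans hM.le)
  rw [isTightMeasureSet_iff_exists_isCompact_measure_compl_le] at hθ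
  intro ε hε
  obtain ⟨K, hK, hKθ⟩ := hθ ε hε
  exact ⟨K, hK, fun n ↦ hKθ _ ⟨n, rfl⟩⟩
end

section
/- Let X be a complete separable metric space, {ν_n}, {θ_n} sequences of Borel probability measures on X with sup_n D_KL(θ_n ‖ ν_n) < ∞ and ν_n converging weakly to ν. If a subsequence of {θ_n} converges weakly to θ, then θ is absolutely continuous with respect to ν. -/
open MeasureTheory Filter Topology Classical
open scoped ENNReal

/-!
A bound `D` on `D_KL(P ‖ Q)` gives, for every `c > 0` and Borel `A`, the affine domination
`P A ≤ (D + 1) / c + e^c Q A`: on `{llr < c}` the density `dP/dQ` is at most `e^c`, while by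
Markov `{llr ≥ c}` has `P`-mass at most `(D + 1) / c`, because `t log t ≥ -1` bounds the
integral of the negative part of `llr` by `1`. Such a domination passes to weak limits, on closed
sets by the portmanteau theorem applied to their thickenings, then on all Borel sets by inner
regularity. A `νlim`-null set therefore has `θlim`-mass at most `(D + 1) / c` for every `c`.
-/

lemma neg_one_le_mul_min_log_zero {t : ℝ} (ht : 0 ≤ t) : -1 ≤ t * min (Real.log t) 0 := by
  rw [mul_min_of_nonneg _ _ ht, mul_zero]
  exact le_min (by linarith [Real.self_sub_one_le_mul_log ht]) (by norm_num)

section LogLikelihoodRatio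

variable {X : Type*} [MeasurableSpace X] {P Q : Measure X}

lemma neg_one_le_integral_min_llr_zero [IsFiniteMeasure P] [IsProbabilityMeasure Q]
    (hPQ : P ≪ Q) (hint : Integrable (llr P Q) P) :
    -1 ≤ ∫ x, min (llr P Q x) 0 ∂P := by
  rw [← integral_rnDeriv_smul hPQ]
  calc (-1 : ℝ) = ∫ _, (-1 : ℝ) ∂Q := by simp
    _ ≤ ∫ x, (P.rnDeriv Q x).toReal • min (llr P Q x) 0 ∂Q :=
      integral_mono (integrable_const _)
        ((integrable_rnDeriv_smul_iff hPQ).mpr (hint.inf (integrable_const 0)))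
        fun x ↦ neg_one_le_mul_min_log_zero ENNReal.toReal_nonneg

lemma measure_llr_ge_le [IsFiniteMeasure P] [IsProbabilityMeasure Q]
    (hPQ : P ≪ Q) (hint : Integrable (llr P Q) P) {c : ℝ} (hc : 0 < c) :
    P {x | c ≤ llr P Q x} ≤ ENNReal.ofReal ((∫ x, llr P Q x ∂P + 1) / c) := by
  have hpos : Integrable (fun x ↦ max (llr P Q x) 0) P := hint.sup (integrable_const 0)
  have hneg : Integrable (fun x ↦ min (llr P Q x) 0) P := hint.inf (integrable_const 0)
  have hsplit : ∫ x, max (llr P Q x) 0 ∂P = ∫ x, llr P Q x ∂P - ∫ x, min (llr P Q x) 0 ∂P := by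
    rw [eq_sub_iff_add_eq, ← integral_add hpos hneg]
    simp_rw [max_add_min, add_zero]
  have hmarkov : c * P.real {x | c ≤ max (llr P Q x) 0} ≤ ∫ x, llr P Q x ∂P + 1 :=
    calc c * P.real {x | c ≤ max (llr P Q x) 0} ≤ ∫ x, max (llr P Q x) 0 ∂P :=
          mul_meas_ge_le_integral_of_nonneg (ae_of_all _ fun _ ↦ le_max_right _ _) hpos c
      _ ≤ ∫ x, llr P Q x ∂P + 1 := by linarith [neg_one_le_integral_min_llr_zero hPQ hint]
  calc P {x | c ≤ llr P Q x} ≤ P {x | c ≤ max (llr P Q x) 0} :=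
        measure_mono fun _ (hx : c ≤ _) ↦ le_max_of_le_left hx
    _ = ENNReal.ofReal (P.real {x | c ≤ max (llr P Q x) 0}) := (ofReal_measureReal).symm
    _ ≤ ENNReal.ofReal ((∫ x, llr P Q x ∂P + 1) / c) :=
        ENNReal.ofReal_le_ofReal ((le_div_iff₀' hc).mpr hmarkov)

lemma measure_inter_llr_lt_le [SigmaFinite P] [SigmaFinite Q] (hPQ : P ≪ Q)
    {A : Set X} (hA : MeasurableSet A) (c : ℝ) :
    P (A ∩ {x | llr P Q x < c}) ≤ ENNReal.ofReal (Real.exp c) * Q A := by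
  have hS : MeasurableSet {x | llr P Q x < c} :=
    measurableSet_lt (measurable_llr _ _) measurable_const
  rw [← Measure.setLIntegral_rnDeriv' hPQ (hA.inter hS)]
  calc ∫⁻ x in A ∩ {x | llr P Q x < c}, P.rnDeriv Q x ∂Q
      ≤ ∫⁻ _ in A ∩ {x | llr P Q x < c}, ENNReal.ofReal (Real.exp c) ∂Q := by
        refine setLIntegral_mono_ae measurable_const.aemeasurable ?_
        filter_upwards [Measure.rnDeriv_lt_top P Q] with x hfin hx
        rw [← ENNReal.ofReal_toReal hfin.ne]
        exact ENNReal.ofReal_le_ofReal <|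
          (Real.le_exp_log _).trans (Real.exp_le_exp.mpr hx.2.le)
    _ ≤ ENNReal.ofReal (Real.exp c) * Q A := by
        rw [setLIntegral_const]
        gcongr
        exact Set.inter_subset_left

lemma measure_le_of_klDiv_le [IsFiniteMeasure P] [IsProbabilityMeasure Q] {D : ℝ}
    (hD : klDiv P Q ≤ D) {c : ℝ} (hc : 0 < c) {A : Set X} (hA : MeasurableSet A) :
    P A ≤ ENNReal.ofReal ((D + 1) / c) + ENNReal.ofReal (Real.exp c) * Q A := by
  unfold klDiv at hD
  split_ifs at hD with hfin
  · obtain ⟨hPQ, hint⟩ := hfin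
    have hDc : ENNReal.ofReal ((∫ x, llr P Q x ∂P + 1) / c) ≤ ENNReal.ofReal ((D + 1) / c) := by
      gcongr
      exact_mod_cast hD
    calc P A ≤ P (A ∩ {x | llr P Q x < c}) + P (A \ {x | llr P Q x < c}) :=
          measure_le_inter_add_sdiff _ _ _
      _ ≤ ENNReal.ofReal (Real.exp c) * Q A + P {x | c ≤ llr P Q x} := by
          gcongr
          · exact measure_inter_llr_lt_le hPQ hA c
          · exact fun x hx ↦ show c ≤ _ from not_lt.mp hx.2
      _ ≤ ENNReal.ofReal ((D + 1) / c) + ENNReal.ofReal (Real.exp c) * Q A := by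
          rw [add_comm]
          gcongr
          exact (measure_llr_ge_le hPQ hint hc).trans hDc
  · simp at hD

end LogLikelihoodRatio

lemma absolutelyContinuous_of_le_add_mul {X ι : Type*} [MeasurableSpace X] {μ ν : Measure X}
    {l : Filter ι} [l.NeBot] {a b : ι → ℝ≥0∞} (ha : Tendsto a l (𝓝 0))
    (h : ∀ᶠ i in l, ∀ A, MeasurableSet A → μ A ≤ a i + b i * ν A) : μ ≪ ν := by
  refine Measure.AbsolutelyContinuous.mk fun A hA hνA ↦ le_antisymm ?_ zero_le
  refine ge_of_tendsto ha ?_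
  filter_upwards [h] with i hi
  simpa [hνA] using hi A hA

section WeakConvergence

open Metric

variable {X ι : Type*} [PseudoEMetricSpace X] [MeasurableSpace X] [BorelSpace X]
  {L : Filter ι} [L.NeBot] {μs νs : ι → ProbabilityMeasure X} {μ ν : ProbabilityMeasure X}
  {a b : ℝ≥0∞}

lemma measure_thickening_le_of_tendsto (hμ : Tendsto μs L (𝓝 μ)) (hν : Tendsto νs L (𝓝 ν))
    (hb : b ≠ ⊤) (h : ∀ i F, IsClosed F → (μs i : Measure X) F ≤ a + b * (νs i : Measure X) F)
    (r : ℝ) (s : Set X) :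
    (μ : Measure X) (thickening r s) ≤ a + b * (ν : Measure X) (cthickening r s) :=
  calc (μ : Measure X) (thickening r s)
      ≤ L.liminf fun i ↦ (μs i : Measure X) (thickening r s) :=
        ProbabilityMeasure.le_liminf_measure_open_of_tendsto hμ isOpen_thickening
    _ ≤ L.liminf fun i ↦ (μs i : Measure X) (cthickening r s) :=
        liminf_le_liminf (.of_forall fun _ ↦ measure_mono (thickening_subset_cthickening r s))
    _ ≤ L.limsup fun i ↦ (μs i : Measure X) (cthickening r s) := liminf_le_limsup
    _ ≤ L.limsup fun i ↦ a + b * (νs i : Measure X) (cthickening r s) :=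
        limsup_le_limsup (.of_forall fun i ↦ h i _ isClosed_cthickening)
    _ = a + b * L.limsup fun i ↦ (νs i : Measure X) (cthickening r s) := by
        rw [limsup_const_add _ _ _ (by isBoundedDefault) (by isBoundedDefault),
          ENNReal.limsup_const_mul_of_ne_top hb]
    _ ≤ a + b * (ν : Measure X) (cthickening r s) := by
        gcongr
        exact ProbabilityMeasure.limsup_measure_closed_le_of_tendsto hν isClosed_cthickening

lemma measure_le_add_mul_of_tendsto_of_isClosed (hμ : Tendsto μs L (𝓝 μ))
    (hν : Tendsto νs L (𝓝 ν)) (hb : b ≠ ⊤)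
    (h : ∀ i F, IsClosed F → (μs i : Measure X) F ≤ a + b * (νs i : Measure X) F)
    {F : Set X} (hF : IsClosed F) :
    (μ : Measure X) F ≤ a + b * (ν : Measure X) F := by
  have hlim : Tendsto (fun r ↦ a + b * (ν : Measure X) (cthickening r F)) (𝓝[>] 0)
      (𝓝 (a + b * (ν : Measure X) F)) :=
    tendsto_const_nhds.add <| ENNReal.Tendsto.const_mul
      ((tendsto_measure_cthickening_of_isClosed ⟨1, one_pos, measure_ne_top _ _⟩ hF).mono_left
        nhdsWithin_le_nhds) (.inr hb)
  refine ge_of_tendsto hlim ?_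
  filter_upwards [self_mem_nhdsWithin] with r (hr : 0 < r)
  exact (measure_mono (self_subset_thickening hr F)).trans
    (measure_thickening_le_of_tendsto hμ hν hb h r F)

lemma measure_le_add_mul_of_tendsto (hμ : Tendsto μs L (𝓝 μ)) (hν : Tendsto νs L (𝓝 ν))
    (hb : b ≠ ⊤) (h : ∀ i F, IsClosed F → (μs i : Measure X) F ≤ a + b * (νs i : Measure X) F)
    {A : Set X} (hA : MeasurableSet A) :
    (μ : Measure X) A ≤ a + b * (ν : Measure X) A := by
  rw [hA.measure_eq_iSup_isClosed_of_ne_top (measure_ne_top _ _)]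
  refine iSup₂_le fun F hFA ↦ iSup_le fun hF ↦ ?_
  exact (measure_le_add_mul_of_tendsto_of_isClosed hμ hν hb h hF).trans (by gcongr)

end WeakConvergence

theorem limit_absolutely_continuous_from_bounded_KL_general
    {X : Type*} [MetricSpace X]
    [MeasurableSpace X] [BorelSpace X]
    (ν θ : ℕ → ProbabilityMeasure X) (νlim θlim : ProbabilityMeasure X)
    (hKL : (⨆ n, klDiv (θ n : Measure X) (ν n : Measure X)) < ⊤)
    (hconv : Tendsto ν atTop (𝓝 νlim))
    (φ : ℕ → ℕ) (hφ : StrictMono φ)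
    (hθconv : Tendsto (θ ∘ φ) atTop (𝓝 θlim)) :
    (θlim : Measure X) ≪ (νlim : Measure X) := by
  set D := (⨆ n, klDiv (θ n : Measure X) (ν n : Measure X)).toReal
  have hD n : klDiv (θ n : Measure X) (ν n : Measure X) ≤ D :=
    (le_iSup (fun n ↦ klDiv (θ n : Measure X) (ν n : Measure X)) n).trans
      (EReal.le_coe_toReal hKL.ne)
  refine absolutelyContinuous_of_le_add_mul (l := atTop)
    (b := fun c ↦ ENNReal.ofReal (Real.exp c)) (a := fun c ↦ ENNReal.ofReal ((D + 1) / c)) ?_ ?_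
  · simpa using ENNReal.tendsto_ofReal (tendsto_const_nhds.div_atTop tendsto_id)
  · filter_upwards [eventually_gt_atTop 0] with c hc A hA
    exact measure_le_add_mul_of_tendsto hθconv (hconv.comp hφ.tendsto_atTop) ENNReal.ofReal_ne_top
      (fun n F hF ↦ measure_le_of_klDiv_le (hD (φ n)) hc hF.measurableSet) hA

/-- If `sup_n D_KL(θ_n ‖ ν_n) < ∞`, `ν_n → ν` weakly, and a subsequence of `θ_n` converges
weakly to `θ`, then `θ ≪ ν`. -/
theorem limit_absolutely_continuous_from_bounded_KL
    {X : Type*} [MetricSpace X] [CompleteSpace X] [TopologicalSpace.SeparableSpace X]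
    [MeasurableSpace X] [BorelSpace X]
    (ν θ : ℕ → ProbabilityMeasure X) (νlim θlim : ProbabilityMeasure X)
    (hKL : (⨆ n, klDiv (θ n : Measure X) (ν n : Measure X)) < ⊤)
    (hconv : Tendsto ν atTop (𝓝 νlim))
    (φ : ℕ → ℕ) (hφ : StrictMono φ)
    (hθconv : Tendsto (θ ∘ φ) atTop (𝓝 θlim)) :
    (θlim : Measure X) ≪ (νlim : Measure X) :=
  limit_absolutely_continuous_from_bounded_KL_general ν θ νlim θlim hKL hconv φ hφ hθconv
end

section
/- Generalized Fatou lemma with varying measures: let X be a Polish space, {H_n} a sequence of nonnegative lower semicontinuous functions H_n: X → [0,∞], uniformly bounded below, and H: X → [0,∞] such that liminf_n H_n(x_n) ≥ H(x) whenever x_n → x in X. If ν_n are Borel probability measures on X converging weakly to ν, then liminf_{n→∞} ∫_X H_n dν_n ≥ ∫_X H dν. -/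
/-!
Replace `H n` by the lower semicontinuous hulls `G m` of the tail infima `⨅ n ≥ m, H n`. They
increase with `m` and lie below `H n` for `n ≥ m`; a diagonal sequence shows that their supremum
dominates `Hlim`. Each `G m` being lower semicontinuous, weak convergence gives
`∫⁻ G m ∂ν ≤ liminf ∫⁻ G m ∂νₙ` (layer cake plus `ν G ≤ liminf νₙ G` for open `G`), and monotone
convergence in `m` finishes the proof.
-/

open MeasureTheory Filter Topology Set
open scoped ENNReal

section Portmanteau

variable {Ω : Type*} [MeasurableSpace Ω] [TopologicalSpace Ω] [OpensMeasurableSpace Ω]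
  {μ : Measure Ω} {μs : ℕ → Measure Ω}

theorem LowerSemicontinuous.lintegral_ofReal_le_liminf_of_forall_isOpen {f : Ω → ℝ}
    (hf : LowerSemicontinuous f) (f_nn : 0 ≤ f)
    (h_opens : ∀ G, IsOpen G → μ G ≤ atTop.liminf fun i ↦ μs i G) :
    ∫⁻ x, ENNReal.ofReal (f x) ∂μ ≤ atTop.liminf fun i ↦ ∫⁻ x, ENNReal.ofReal (f x) ∂μs i := by
  simp_rw [lintegral_eq_lintegral_meas_lt _ (Eventually.of_forall f_nn) hf.measurable.aemeasurable]
  calc ∫⁻ t in Ioi 0, μ {a | t < f a}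
      ≤ ∫⁻ t in Ioi 0, atTop.liminf fun i ↦ μs i {a | t < f a} :=
        lintegral_mono fun t ↦ h_opens _ (hf.isOpen_preimage t)
    _ ≤ atTop.liminf fun i ↦ ∫⁻ t in Ioi 0, μs i {a | t < f a} :=
        lintegral_liminf_le fun _ ↦ Antitone.measurable fun _ _ hst ↦
          measure_mono fun _ hω ↦ hst.trans_lt hω

theorem LowerSemicontinuous.lintegral_le_liminf_of_forall_isOpen {g : Ω → ℝ≥0∞}
    (hg : LowerSemicontinuous g)
    (h_opens : ∀ G, IsOpen G → μ G ≤ atTop.liminf fun i ↦ μs i G) :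
    ∫⁻ x, g x ∂μ ≤ atTop.liminf fun i ↦ ∫⁻ x, g x ∂μs i := by
  have ofReal_truncate (N : ℕ) (x : Ω) :
      ENNReal.ofReal (ENNReal.truncateToReal N (g x)) = min (N : ℝ≥0∞) (g x) :=
    ENNReal.ofReal_toReal (ne_top_of_le_ne_top (ENNReal.natCast_ne_top N) (min_le_left _ _))
  have iSup_truncate (x : Ω) : ⨆ N : ℕ, min (N : ℝ≥0∞) (g x) = g x := by
    rw [← iSup_inf_eq, ENNReal.iSup_natCast, top_inf_eq]
  have truncate_mono : Monotone fun (N : ℕ) x ↦ min (N : ℝ≥0∞) (g x) :=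
    fun _ _ hNM _ ↦ min_le_min_right _ (Nat.cast_le.mpr hNM)
  calc ∫⁻ x, g x ∂μ = ⨆ N : ℕ, ∫⁻ x, min (N : ℝ≥0∞) (g x) ∂μ := by
        simp_rw [← lintegral_iSup (fun N ↦ measurable_const.min hg.measurable) truncate_mono,
          iSup_truncate]
    _ ≤ ⨆ N : ℕ, atTop.liminf fun i ↦ ∫⁻ x, min (N : ℝ≥0∞) (g x) ∂μs i := by
        refine iSup_mono fun N ↦ ?_
        have hN : (N : ℝ≥0∞) ≠ ∞ := ENNReal.natCast_ne_top N
        simpa only [Function.comp_apply, ofReal_truncate] using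
          ((ENNReal.continuous_truncateToReal hN).comp_lowerSemicontinuous hg
            (ENNReal.monotone_truncateToReal hN)).lintegral_ofReal_le_liminf_of_forall_isOpen
            (fun _ ↦ ENNReal.truncateToReal_nonneg) h_opens
    _ ≤ atTop.liminf fun i ↦ ∫⁻ x, g x ∂μs i :=
        iSup_le fun _ ↦ liminf_le_liminf <| Eventually.of_forall fun _ ↦
          lintegral_mono fun _ ↦ min_le_right _ _

end Portmanteau

section LowerSemicontinuousHull

variable {X : Type*} [TopologicalSpace X]

noncomputable def lowerSemicontinuousHull (f : X → ℝ≥0∞) (x : X) : ℝ≥0∞ :=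
  liminf f (𝓝 x)

theorem lowerSemicontinuousHull_le (f : X → ℝ≥0∞) : lowerSemicontinuousHull f ≤ f := fun x ↦
  liminf_le_of_frequently_le <| (Eventually.frequently (eventually_pure.mpr le_rfl :
    ∀ᶠ y in pure x, f y ≤ f x)).filter_mono (pure_le_nhds x)

theorem lowerSemicontinuousHull_mono : Monotone (lowerSemicontinuousHull (X := X)) :=
  fun _ _ hfg _ ↦ liminf_le_liminf (Eventually.of_forall hfg)

theorem lowerSemicontinuous_lowerSemicontinuousHull (f : X → ℝ≥0∞) :
    LowerSemicontinuous (lowerSemicontinuousHull f) := by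
  intro x c hc
  obtain ⟨b, hcb, hb⟩ := exists_between hc
  have hbf : ∀ᶠ y in 𝓝 x, b < f y := eventually_lt_of_lt_liminf hb
  filter_upwards [hbf.eventually_nhds] with y hy
  exact hcb.trans_le (le_liminf_of_le (by isBoundedDefault) (hy.mono fun _ ↦ le_of_lt))

end LowerSemicontinuousHull

theorem Filter.Tendsto.extend_of_strictMono {X : Type*} [TopologicalSpace X] {φ : ℕ → ℕ}
    (hφ : StrictMono φ) {y : ℕ → X} {x : X} (hy : Tendsto y atTop (𝓝 x)) :
    Tendsto (Function.extend φ y fun _ ↦ x) atTop (𝓝 x) := by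
  intro U hU
  obtain ⟨J, hJ⟩ := eventually_atTop.mp (hy hU)
  refine eventually_atTop.mpr ⟨φ J, fun n hn ↦ ?_⟩
  by_cases h : ∃ j, φ j = n
  · obtain ⟨j, rfl⟩ := h
    rw [hφ.injective.extend_apply]
    exact hJ j (hφ.le_iff_le.mp hn)
  · rw [Function.extend_apply' _ _ _ h]
    exact mem_of_mem_nhds hU

theorem le_iSup_lowerSemicontinuousHull_iInf_of_le_liminf {X : Type*} [TopologicalSpace X]
    [FirstCountableTopology X] (H : ℕ → X → ℝ≥0∞) (Hlim : X → ℝ≥0∞)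
    (hliminf : ∀ (x : X) (xs : ℕ → X), Tendsto xs atTop (𝓝 x) →
      Hlim x ≤ liminf (fun n ↦ H n (xs n)) atTop) (x : X) :
    Hlim x ≤ ⨆ m, lowerSemicontinuousHull (fun y ↦ ⨅ n ≥ m, H n y) x := by
  obtain ⟨u, hu⟩ := (𝓝 x).exists_antitone_basis
  refine le_of_forall_gt_imp_ge_of_dense fun c hc ↦ ?_
  have hfreq : ∀ j, ∃ᶠ n in atTop, ∃ y ∈ u j, H n y < c := by
    intro j
    refine frequently_atTop.mpr fun m ↦ ?_
    have hm : liminf (fun y ↦ ⨅ n ≥ m, H n y) (𝓝 x) < c :=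
      (le_iSup (fun m ↦ lowerSemicontinuousHull (fun y ↦ ⨅ n ≥ m, H n y) x) m).trans_lt hc
    obtain ⟨y, hyc, hyu⟩ :=
      ((frequently_lt_of_liminf_lt (by isBoundedDefault) hm).and_eventually (hu.mem j)).exists
    obtain ⟨n, hmn, hn⟩ : ∃ n ≥ m, H n y < c := by simpa only [iInf_lt_iff, exists_prop] using hyc
    exact ⟨n, hmn, y, hyu, hn⟩
  obtain ⟨φ, hφ, hφu⟩ := extraction_forall_of_frequently hfreq
  choose y hyu hyc using hφu
  -- The points `y j` sit at the times `φ j`; every other time gets `x` itself.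
  calc Hlim x ≤ liminf (fun n ↦ H n (Function.extend φ y (fun _ ↦ x) n)) atTop :=
        hliminf x _ ((hu.tendsto hyu).extend_of_strictMono hφ)
    _ ≤ c := by
        refine liminf_le_of_frequently_le (hφ.tendsto_atTop.frequently
          (Frequently.of_forall fun j ↦ ?_)) (by isBoundedDefault)
        rw [hφ.injective.extend_apply]
        exact (hyc j).le

theorem fatou_varying_measures_general
    {X : Type*} [MetricSpace X]
    [MeasurableSpace X] [BorelSpace X]
    (H : ℕ → X → ℝ≥0∞) (Hlim : X → ℝ≥0∞)
    (hliminf : ∀ (x : X) (xs : ℕ → X), Tendsto xs atTop (𝓝 x) →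
      Hlim x ≤ liminf (fun n => H n (xs n)) atTop)
    (ν : ℕ → ProbabilityMeasure X) (νlim : ProbabilityMeasure X)
    (hν : Tendsto ν atTop (𝓝 νlim)) :
    (∫⁻ x, Hlim x ∂(νlim : Measure X))
      ≤ liminf (fun n => ∫⁻ x, H n x ∂(ν n : Measure X)) atTop := by
  set G : ℕ → X → ℝ≥0∞ := fun m ↦ lowerSemicontinuousHull fun y ↦ ⨅ n ≥ m, H n y
  have hG_mono : Monotone G := fun _ _ hmm' ↦
    lowerSemicontinuousHull_mono fun _ ↦ biInf_mono fun _ ↦ hmm'.trans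
  have hG_le (m n : ℕ) (hmn : m ≤ n) (x : X) : G m x ≤ H n x :=
    (lowerSemicontinuousHull_le _ x).trans (biInf_le _ hmn)
  calc ∫⁻ x, Hlim x ∂νlim
      ≤ ∫⁻ x, ⨆ m, G m x ∂νlim :=
        lintegral_mono (le_iSup_lowerSemicontinuousHull_iInf_of_le_liminf H Hlim hliminf)
    _ = ⨆ m, ∫⁻ x, G m x ∂νlim :=
        lintegral_iSup (fun m ↦ (lowerSemicontinuous_lowerSemicontinuousHull _).measurable) hG_mono
    _ ≤ liminf (fun n ↦ ∫⁻ x, H n x ∂ν n) atTop := iSup_le fun m ↦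
        ((lowerSemicontinuous_lowerSemicontinuousHull _).lintegral_le_liminf_of_forall_isOpen
          fun _ hU ↦ ProbabilityMeasure.le_liminf_measure_open_of_tendsto hν hU).trans <|
        liminf_le_liminf <| (eventually_ge_atTop m).mono fun n hmn ↦
          lintegral_mono (hG_le m n hmn)

/-- Generalized Fatou lemma with varying measures: if the nonnegative lower semicontinuous
functions `H_n` satisfy `liminf H_n (x_n) ≥ H x` whenever `x_n → x`, and the probability
measures `ν_n` converge weakly to `ν`, then `liminf ∫ H_n dν_n ≥ ∫ H dν`. -/
theorem fatou_varying_measures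
    {X : Type*} [MetricSpace X] [CompleteSpace X] [TopologicalSpace.SeparableSpace X]
    [MeasurableSpace X] [BorelSpace X]
    (H : ℕ → X → ℝ≥0∞) (Hlim : X → ℝ≥0∞)
    (hlsc : ∀ n, LowerSemicontinuous (H n))
    (hliminf : ∀ (x : X) (xs : ℕ → X), Tendsto xs atTop (𝓝 x) →
      Hlim x ≤ liminf (fun n => H n (xs n)) atTop)
    (ν : ℕ → ProbabilityMeasure X) (νlim : ProbabilityMeasure X)
    (hν : Tendsto ν atTop (𝓝 νlim)) :
    (∫⁻ x, Hlim x ∂(νlim : Measure X))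
      ≤ liminf (fun n => ∫⁻ x, H n x ∂(ν n : Measure X)) atTop :=
  fatou_varying_measures_general H Hlim hliminf ν νlim hν
end

section
/- The TL² distance is a metric: on the set TL² = {(θ, f) : θ a Borel probability measure on a compact Riemannian manifold M, f ∈ L²(M, θ)}, the function d_{TL²}((θ₁,f₁),(θ₂,f₂)) = inf over couplings ω of θ₁ and θ₂ of ( ∬ (d_M(x,y)² + |f₁(x) − f₂(y)|²) dω(x,y) )^{1/2} defines a distance (it is symmetric, satisfies the triangle inequality, and vanishes exactly when (θ₁,f₁) = (θ₂,f₂) as elements of TL²). -/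
/-!
Let `Γf = l2Graph f : x ↦ (x, f x)` be the graph map into `M × ℝ` with the `ℓ²` product metric.
The integrand of `TLdist` is `edist (Γf₁ x) (Γf₂ y) ^ 2`, so `TLdist θ₁ θ₂ f₁ f₂` is the `L²`
transport distance between the maps `Γf₁` and `Γf₂` over couplings of `θ₁` and `θ₂`. Symmetry
comes from swapping couplings. For the triangle inequality, glue two couplings along their common
marginal `θ₂` (disintegration, available since a compact metric space is standard Borel) and apply
the triangle inequality in `M × ℝ` followed by Minkowski's inequality. If the distance vanishes,
Markov's inequality bounds the Lévy–Prokhorov distance between the graph measures `(Γfᵢ)₊θᵢ` by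
the coupling cost to the power `2/3`, so these measures coincide; projecting to `M` gives
`θ₁ = θ₂`, and the graph of `f₁` having full measure gives `f₁ = f₂` a.e.
-/

open MeasureTheory Filter Topology
open scoped ENNReal

/-- The `TL²` (pre)distance between pairs `(θ₁, f₁)` and `(θ₂, f₂)`: the infimum over
couplings `ω` of `θ₁` and `θ₂` of `(∬ (d(x,y)² + |f₁(x) − f₂(y)|²) dω)^{1/2}`. -/
noncomputable def TLdist {M : Type*} [MetricSpace M] [MeasurableSpace M]
    (θ₁ θ₂ : Measure M) (f₁ f₂ : M → ℝ) : ℝ≥0∞ :=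
  ⨅ ω ∈ {ω : Measure (M × M) | ω.map Prod.fst = θ₁ ∧ ω.map Prod.snd = θ₂},
    (∫⁻ p, ENNReal.ofReal (dist p.1 p.2 ^ 2 + |f₁ p.1 - f₂ p.2| ^ 2) ∂ω) ^ (1/2 : ℝ)

open ProbabilityTheory Metric

namespace MeasureTheory

section Couplings

variable {α β γ : Type*} [MeasurableSpace α] [MeasurableSpace β] [MeasurableSpace γ]

def couplings (μ : Measure α) (ν : Measure β) : Set (Measure (α × β)) :=
  {ω | ω.map Prod.fst = μ ∧ ω.map Prod.snd = ν}

variable {μ₁ : Measure α} {μ₂ : Measure β} {μ₃ : Measure γ}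

lemma map_swap_mem_couplings {ω : Measure (α × β)} (hω : ω ∈ couplings μ₁ μ₂) :
    ω.map Prod.swap ∈ couplings μ₂ μ₁ := by
  constructor
  · rw [Measure.map_map measurable_fst measurable_swap]; exact hω.2
  · rw [Measure.map_map measurable_snd measurable_swap]; exact hω.1

lemma map_diag_mem_couplings (μ : Measure α) : μ.map (fun x ↦ (x, x)) ∈ couplings μ μ := by
  have hdiag : Measurable fun x : α ↦ (x, x) := measurable_id.prodMk measurable_id
  constructor
  · rw [Measure.map_map measurable_fst hdiag]; exact Measure.map_id
  · rw [Measure.map_map measurable_snd hdiag]; exact Measure.map_id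

lemma isFiniteMeasure_of_mem_couplings [IsFiniteMeasure μ₁] {ω : Measure (α × β)}
    (hω : ω ∈ couplings μ₁ μ₂) : IsFiniteMeasure ω :=
  have : IsFiniteMeasure (ω.map Prod.fst) := hω.1 ▸ ‹_›
  Measure.isFiniteMeasure_of_map measurable_fst.aemeasurable

lemma Measure.map_compProd_prod_fst {μ : Measure α} [SFinite μ] (κ : Kernel α β)
    [IsMarkovKernel κ] (η : Kernel α γ) [IsMarkovKernel η] :
    (μ ⊗ₘ (κ ×ₖ η)).map (fun p ↦ (p.1, p.2.1)) = μ ⊗ₘ κ := by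
  change (μ ⊗ₘ (κ ×ₖ η)).map (Prod.map id Prod.fst) = _
  rw [← Measure.compProd_map measurable_fst, ← Kernel.fst_eq, Kernel.fst_prod]

lemma Measure.map_compProd_prod_snd {μ : Measure α} [SFinite μ] (κ : Kernel α β)
    [IsMarkovKernel κ] (η : Kernel α γ) [IsMarkovKernel η] :
    (μ ⊗ₘ (κ ×ₖ η)).map (fun p ↦ (p.1, p.2.2)) = μ ⊗ₘ η := by
  change (μ ⊗ₘ (κ ×ₖ η)).map (Prod.map id Prod.snd) = _
  rw [← Measure.compProd_map measurable_snd, ← Kernel.snd_eq, Kernel.snd_prod]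

theorem exists_gluing [StandardBorelSpace α] [Nonempty α] [StandardBorelSpace γ] [Nonempty γ]
    [IsFiniteMeasure μ₂] {ω₁₂ : Measure (α × β)} {ω₂₃ : Measure (β × γ)}
    (h₁₂ : ω₁₂ ∈ couplings μ₁ μ₂) (h₂₃ : ω₂₃ ∈ couplings μ₂ μ₃) :
    ∃ ν : Measure (β × α × γ), ν.map (fun p ↦ (p.2.1, p.1)) = ω₁₂ ∧
      ν.map (fun p ↦ (p.1, p.2.2)) = ω₂₃ ∧ ν.map Prod.snd ∈ couplings μ₁ μ₃ := by
  set ρ := ω₁₂.map Prod.swap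
  have hρ : ρ ∈ couplings μ₂ μ₁ := map_swap_mem_couplings h₁₂
  have := isFiniteMeasure_of_mem_couplings hρ
  have := isFiniteMeasure_of_mem_couplings h₂₃
  -- Given the middle coordinate, draw the outer ones independently from the two disintegrations.
  set ν := μ₂ ⊗ₘ (ρ.condKernel ×ₖ ω₂₃.condKernel)
  have hν₁₂ : ν.map (fun p ↦ (p.2.1, p.1)) = ω₁₂ := by
    have : ν.map (fun p ↦ (p.1, p.2.1)) = ρ := by
      rw [Measure.map_compProd_prod_fst, ← hρ.1]; exact ρ.disintegrate _
    rw [show (fun p : β × α × γ ↦ (p.2.1, p.1)) = Prod.swap ∘ (fun p ↦ (p.1, p.2.1)) from rfl,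
      ← Measure.map_map measurable_swap (by fun_prop), this,
      Measure.map_map measurable_swap measurable_swap]
    simp
  have hν₂₃ : ν.map (fun p ↦ (p.1, p.2.2)) = ω₂₃ := by
    rw [Measure.map_compProd_prod_snd, ← h₂₃.1]; exact ω₂₃.disintegrate _
  refine ⟨ν, hν₁₂, hν₂₃, ?_, ?_⟩
  · rw [Measure.map_map measurable_fst measurable_snd, ← h₁₂.1, ← hν₁₂,
      Measure.map_map measurable_fst (by fun_prop)]
    rfl
  · rw [Measure.map_map measurable_snd measurable_snd, ← h₂₃.2, ← hν₂₃,
      Measure.map_map measurable_snd (by fun_prop)]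
    rfl

end Couplings

section Transport

variable {α β γ X : Type*} [MeasurableSpace α] [MeasurableSpace β] [MeasurableSpace γ]
  [PseudoEMetricSpace X]

noncomputable def couplingCost (F : α → X) (G : β → X) (ω : Measure (α × β)) : ℝ≥0∞ :=
  eLpNorm (fun p ↦ edist (F p.1) (G p.2)) 2 ω

noncomputable def transportDist (μ : Measure α) (ν : Measure β) (F : α → X) (G : β → X) : ℝ≥0∞ :=
  ⨅ ω ∈ couplings μ ν, couplingCost F G ω

variable {μ : Measure α} {ν : Measure β}

lemma couplingCost_map_swap (F : α → X) (G : β → X) (ω : Measure (α × β)) :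
    couplingCost G F (ω.map Prod.swap) = couplingCost F G ω := by
  refine MeasurableEquiv.prodComm.measurableEmbedding.eLpNorm_map_measure.trans ?_
  simp_rw [Function.comp_def, edist_comm]
  rfl

theorem transportDist_comm (μ : Measure α) (ν : Measure β) (F : α → X) (G : β → X) :
    transportDist μ ν F G = transportDist ν μ G F :=
  le_antisymm
    (le_iInf₂ fun ω hω ↦ iInf₂_le_of_le _ (map_swap_mem_couplings hω)
      (couplingCost_map_swap G F ω).le)
    (le_iInf₂ fun ω hω ↦ iInf₂_le_of_le _ (map_swap_mem_couplings hω)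
      (couplingCost_map_swap F G ω).le)

theorem transportDist_congr_ae {F F' : α → X} {G G' : β → X} (hF : F =ᵐ[μ] F')
    (hG : G =ᵐ[ν] G') : transportDist μ ν F G = transportDist μ ν F' G' := by
  refine iInf_congr fun ω ↦ iInf_congr fun hω ↦ eLpNorm_congr_ae ?_
  have hF' : ∀ᵐ p ∂ω, F p.1 = F' p.1 := ae_of_ae_map measurable_fst.aemeasurable (hω.1 ▸ hF)
  have hG' : ∀ᵐ p ∂ω, G p.2 = G' p.2 := ae_of_ae_map measurable_snd.aemeasurable (hω.2 ▸ hG)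
  filter_upwards [hF', hG'] with p h₁ h₂
  rw [h₁, h₂]

variable [MeasurableSpace X] [OpensMeasurableSpace X]

theorem meas_map_le_meas_map_thickening_add {F : α → X} {G : β → X} (hF : Measurable F)
    (hG : Measurable G) {ω : Measure (α × β)} (hω : ω ∈ couplings μ ν) {B : Set X}
    (hB : MeasurableSet B) {ε : ℝ≥0∞} (hε : ε ≠ ∞) :
    μ.map F B ≤ ν.map G (thickening ε.toReal B) + ω {p | ε ≤ edist (F p.1) (G p.2)} := by
  have hsub : F ∘ Prod.fst ⁻¹' B ⊆
      G ∘ Prod.snd ⁻¹' thickening ε.toReal B ∪ {p | ε ≤ edist (F p.1) (G p.2)} := by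
    intro p hp
    refine (lt_or_ge (edist (F p.1) (G p.2)) ε).imp (fun hlt ↦ ?_) id
    rw [Set.mem_preimage, Function.comp_apply, mem_thickening_iff_infEDist_lt,
      ENNReal.ofReal_toReal hε]
    exact (infEDist_le_edist_of_mem (x := G p.2) (show F p.1 ∈ B from hp)).trans_lt
      (edist_comm (F p.1) (G p.2) ▸ hlt)
  rw [← hω.1, ← hω.2, Measure.map_map hF measurable_fst, Measure.map_map hG measurable_snd,
    Measure.map_apply (hF.comp measurable_fst) hB,
    Measure.map_apply (hG.comp measurable_snd) isOpen_thickening.measurableSet]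
  exact (measure_mono hsub).trans (measure_union_le _ _)

variable [SecondCountableTopology X]

lemma couplingCost_map {δ : Type*} [MeasurableSpace δ] {ρ : Measure δ} {f : δ → α × β}
    (hf : Measurable f) {F : α → X} {G : β → X} (hF : Measurable F) (hG : Measurable G) :
    couplingCost F G (ρ.map f) = eLpNorm (fun p ↦ edist (F (f p).1) (G (f p).2)) 2 ρ :=
  eLpNorm_map_measure ((hF.comp measurable_fst).edist (hG.comp measurable_snd)).aestronglyMeasurable
    hf.aemeasurable

theorem transportDist_triangle [StandardBorelSpace α] [Nonempty α] [StandardBorelSpace γ]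
    [Nonempty γ] {μ₁ : Measure α} {μ₂ : Measure β} {μ₃ : Measure γ} [IsFiniteMeasure μ₂]
    {F : α → X} {G : β → X} {H : γ → X} (hF : Measurable F) (hG : Measurable G)
    (hH : Measurable H) :
    transportDist μ₁ μ₃ F H ≤ transportDist μ₁ μ₂ F G + transportDist μ₂ μ₃ G H := by
  refine ENNReal.le_iInf₂_add_iInf₂ fun ω₁₂ h₁₂ ω₂₃ h₂₃ ↦ ?_
  obtain ⟨ν, hν₁₂, hν₂₃, hν₁₃⟩ := exists_gluing h₁₂ h₂₃
  have hFG : Measurable fun p : β × α × γ ↦ edist (F p.2.1) (G p.1) := by fun_prop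
  have hGH : Measurable fun p : β × α × γ ↦ edist (G p.1) (H p.2.2) := by fun_prop
  calc transportDist μ₁ μ₃ F H
      ≤ couplingCost F H (ν.map Prod.snd) := iInf₂_le _ hν₁₃
    _ = eLpNorm (fun p ↦ edist (F p.2.1) (H p.2.2)) 2 ν := couplingCost_map measurable_snd hF hH
    _ ≤ eLpNorm ((fun p ↦ edist (F p.2.1) (G p.1)) + fun p ↦ edist (G p.1) (H p.2.2)) 2 ν :=
        eLpNorm_mono_enorm fun p ↦ by simpa using edist_triangle _ _ _
    _ ≤ eLpNorm (fun p ↦ edist (F p.2.1) (G p.1)) 2 ν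
          + eLpNorm (fun p ↦ edist (G p.1) (H p.2.2)) 2 ν :=
        eLpNorm_add_le hFG.aestronglyMeasurable hGH.aestronglyMeasurable one_le_two
    _ = couplingCost F G ω₁₂ + couplingCost G H ω₂₃ := by
        rw [← hν₁₂, ← hν₂₃, couplingCost_map (by fun_prop) hF hG,
          couplingCost_map (by fun_prop) hG hH]

theorem transportDist_eq_zero_of_ae_eq {F G : α → X} (hF : Measurable F) (hG : Measurable G)
    (h : F =ᵐ[μ] G) : transportDist μ μ F G = 0 := by
  refine le_antisymm (iInf₂_le_of_le _ (map_diag_mem_couplings μ) (le_of_eq ?_)) bot_le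
  rw [couplingCost_map (by fun_prop) hF hG]
  refine eLpNorm_eq_zero_of_ae_zero ?_
  filter_upwards [h] with x hx
  simp [hx]

theorem levyProkhorovEDist_map_le_couplingCost_rpow [IsProbabilityMeasure μ]
    [IsProbabilityMeasure ν] {F : α → X} {G : β → X} (hF : Measurable F) (hG : Measurable G)
    {ω : Measure (α × β)} (hω : ω ∈ couplings μ ν) :
    levyProkhorovEDist (μ.map F) (ν.map G) ≤ couplingCost F G ω ^ (2 / 3 : ℝ) := by
  have := Measure.isProbabilityMeasure_map (μ := μ) hF.aemeasurable
  have := Measure.isProbabilityMeasure_map (μ := ν) hG.aemeasurable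
  refine levyProkhorovEDist_le_of_forall_le _ _ _ fun ε B hε hε_top hB ↦ ?_
  have hε₀ : ε ≠ 0 := (bot_le.trans_lt hε).ne'
  have hcost : ε⁻¹ ^ (2 : ℝ) * couplingCost F G ω ^ (2 : ℝ) ≤ ε := by
    calc ε⁻¹ ^ (2 : ℝ) * couplingCost F G ω ^ (2 : ℝ)
        = ε⁻¹ ^ (2 : ℝ) * (couplingCost F G ω ^ (2 / 3 : ℝ)) ^ (3 : ℝ) := by
          rw [← ENNReal.rpow_mul]; norm_num
      _ ≤ ε⁻¹ ^ (2 : ℝ) * ε ^ (3 : ℝ) := by gcongr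
      _ = ε := by
          rw [ENNReal.inv_rpow, show (3 : ℝ) = 2 + 1 by norm_num,
            ENNReal.rpow_add _ _ hε₀ hε_top.ne, ENNReal.rpow_one, ← mul_assoc,
            ENNReal.inv_mul_cancel (by simp [hε₀]) (by simp [hε_top.ne]), one_mul]
  have hmarkov : ω {p | ε ≤ edist (F p.1) (G p.2)} ≤
      ε⁻¹ ^ (2 : ℝ) * couplingCost F G ω ^ (2 : ℝ) := by
    simpa [couplingCost] using meas_ge_le_mul_pow_eLpNorm_enorm ω two_ne_zero ENNReal.ofNat_ne_top
      ((hF.comp measurable_fst).edist (hG.comp measurable_snd)).aestronglyMeasurable hε₀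
      (by simp [hε_top.ne])
  calc μ.map F B
      ≤ ν.map G (thickening ε.toReal B) + ω {p | ε ≤ edist (F p.1) (G p.2)} :=
        meas_map_le_meas_map_thickening_add hF hG hω hB hε_top.ne
    _ ≤ ν.map G (thickening ε.toReal B) + ε := by gcongr; exact hmarkov.trans hcost

theorem levyProkhorovEDist_map_le_transportDist_rpow [IsProbabilityMeasure μ]
    [IsProbabilityMeasure ν] {F : α → X} {G : β → X} (hF : Measurable F) (hG : Measurable G) :
    levyProkhorovEDist (μ.map F) (ν.map G) ≤ transportDist μ ν F G ^ (2 / 3 : ℝ) := by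
  refine le_of_forall_gt_imp_ge_of_dense fun t ht ↦ ?_
  have : transportDist μ ν F G < t ^ (2 / 3 : ℝ)⁻¹ := by
    have := ENNReal.rpow_lt_rpow ht (by norm_num : (0 : ℝ) < (2 / 3 : ℝ)⁻¹)
    rwa [ENNReal.rpow_rpow_inv (by norm_num)] at this
  obtain ⟨ω, hω, hcost⟩ : ∃ ω ∈ couplings μ ν, couplingCost F G ω < t ^ (2 / 3 : ℝ)⁻¹ := by
    simpa only [transportDist, iInf_lt_iff, exists_prop] using this
  calc levyProkhorovEDist (μ.map F) (ν.map G) ≤ couplingCost F G ω ^ (2 / 3 : ℝ) :=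
        levyProkhorovEDist_map_le_couplingCost_rpow hF hG hω
    _ ≤ (t ^ (2 / 3 : ℝ)⁻¹) ^ (2 / 3 : ℝ) := by gcongr
    _ = t := ENNReal.rpow_inv_rpow (by norm_num) t

end Transport

theorem Measure.eq_of_levyProkhorovEDist_eq_zero {X : Type*} [PseudoEMetricSpace X]
    [MeasurableSpace X] [BorelSpace X] {μ ν : Measure X} [IsFiniteMeasure μ] [IsFiniteMeasure ν]
    (h : levyProkhorovEDist μ ν = 0) : μ = ν := by
  have hclosed : ∀ s : Set X, IsClosed s → μ s = ν s := fun s hs ↦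
    measure_eq_measure_of_levyProkhorovEDist_eq_zero_of_isClosed h hs
      ⟨1, one_pos, measure_ne_top _ _⟩ ⟨1, one_pos, measure_ne_top _ _⟩
  refine ext_of_generate_finite _ ?_ isPiSystem_isClosed hclosed (hclosed _ isClosed_univ)
  rw [BorelSpace.measurable_eq (α := X), borel_eq_generateFrom_isClosed]

theorem map_eq_map_of_transportDist_eq_zero {α β X : Type*} [MeasurableSpace α]
    [MeasurableSpace β] [PseudoEMetricSpace X] [MeasurableSpace X] [BorelSpace X]
    [SecondCountableTopology X] {μ : Measure α} {ν : Measure β} [IsProbabilityMeasure μ]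
    [IsProbabilityMeasure ν] {F : α → X} {G : β → X} (hF : Measurable F) (hG : Measurable G)
    (h : transportDist μ ν F G = 0) : μ.map F = ν.map G :=
  Measure.eq_of_levyProkhorovEDist_eq_zero <| le_antisymm
    (by simpa [h] using levyProkhorovEDist_map_le_transportDist_rpow (μ := μ) (ν := ν) hF hG)
    bot_le

end MeasureTheory

section TL

variable {M : Type*}

def l2Graph (f : M → ℝ) (x : M) : WithLp 2 (M × ℝ) := WithLp.toLp 2 (x, f x)

lemma edist_l2Graph_rpow_two [MetricSpace M] (f g : M → ℝ) (x y : M) :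
    edist (l2Graph f x) (l2Graph g y) ^ (2 : ℝ) =
      ENNReal.ofReal (dist x y ^ 2 + |f x - g y| ^ 2) := by
  rw [WithLp.prod_edist_eq_add (by norm_num), ← ENNReal.rpow_mul]
  norm_num [l2Graph]
  rw [ENNReal.ofReal_add (by positivity) (by positivity), edist_dist, edist_dist,
    ← ENNReal.ofReal_pow dist_nonneg, ← ENNReal.ofReal_pow dist_nonneg, Real.dist_eq, sq_abs]

variable [MeasurableSpace M]

lemma measurable_l2Graph {f : M → ℝ} (hf : Measurable f) :
    Measurable (l2Graph f) := by
  unfold l2Graph; fun_prop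

lemma l2Graph_congr_ae {θ : Measure M} {f g : M → ℝ} (h : f =ᵐ[θ] g) :
    l2Graph f =ᵐ[θ] l2Graph g :=
  h.mono fun x hx ↦ by rw [l2Graph, l2Graph, hx]

theorem eq_and_ae_eq_of_map_l2Graph_eq {θ₁ θ₂ : Measure M} {f₁ f₂ : M → ℝ}
    (hf₁ : Measurable f₁) (hf₂ : Measurable f₂)
    (h : θ₁.map (l2Graph f₁) = θ₂.map (l2Graph f₂)) : θ₁ = θ₂ ∧ f₁ =ᵐ[θ₁] f₂ := by
  have hfst : ∀ f : M → ℝ, Measurable f → ∀ θ : Measure M,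
      (θ.map (l2Graph f)).map (fun q ↦ q.ofLp.1) = θ := fun f hf θ ↦ by
    rw [Measure.map_map (by fun_prop) (measurable_l2Graph hf)]
    exact Measure.map_id
  have hθ : θ₁ = θ₂ := by rw [← hfst f₁ hf₁ θ₁, h, hfst f₂ hf₂ θ₂]
  refine ⟨hθ, ?_⟩
  have hgraph : ∀ᵐ q ∂θ₁.map (l2Graph f₁), f₁ q.ofLp.1 = q.ofLp.2 := by
    rw [ae_map_iff (measurable_l2Graph hf₁).aemeasurable
      (measurableSet_eq_fun (by fun_prop) (by fun_prop))]
    exact ae_of_all _ fun x ↦ rfl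
  rw [h] at hgraph
  rw [hθ]
  exact ae_of_ae_map (measurable_l2Graph hf₂).aemeasurable hgraph

variable [MetricSpace M]

theorem TLdist_eq_transportDist (θ₁ θ₂ : Measure M) (f₁ f₂ : M → ℝ) :
    TLdist θ₁ θ₂ f₁ f₂ = transportDist θ₁ θ₂ (l2Graph f₁) (l2Graph f₂) := by
  refine iInf_congr fun ω ↦ iInf_congr fun _ ↦ ?_
  rw [couplingCost, eLpNorm_eq_lintegral_rpow_enorm_toReal two_ne_zero ENNReal.ofNat_ne_top]
  simp only [enorm_eq_self, ENNReal.toReal_ofNat, edist_l2Graph_rpow_two]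

theorem TLdist_congr_ae {θ₁ θ₂ : Measure M} {f₁ f₂ g₁ g₂ : M → ℝ} (h₁ : f₁ =ᵐ[θ₁] g₁)
    (h₂ : f₂ =ᵐ[θ₂] g₂) : TLdist θ₁ θ₂ f₁ f₂ = TLdist θ₁ θ₂ g₁ g₂ := by
  simp only [TLdist_eq_transportDist]
  exact transportDist_congr_ae (l2Graph_congr_ae h₁) (l2Graph_congr_ae h₂)

theorem TLdist_comm (θ₁ θ₂ : Measure M) (f₁ f₂ : M → ℝ) :
    TLdist θ₁ θ₂ f₁ f₂ = TLdist θ₂ θ₁ f₂ f₁ := by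
  simp only [TLdist_eq_transportDist, transportDist_comm θ₁]

theorem TLdist_triangle [PolishSpace M] [BorelSpace M] {θ₁ θ₂ θ₃ : Measure M}
    [IsProbabilityMeasure θ₂] {f₁ f₂ f₃ : M → ℝ} (hf₁ : AEMeasurable f₁ θ₁)
    (hf₂ : AEMeasurable f₂ θ₂) (hf₃ : AEMeasurable f₃ θ₃) :
    TLdist θ₁ θ₃ f₁ f₃ ≤ TLdist θ₁ θ₂ f₁ f₂ + TLdist θ₂ θ₃ f₂ f₃ := by
  have : Nonempty M := Measure.nonempty_of_neZero θ₂
  rw [TLdist_congr_ae hf₁.ae_eq_mk hf₂.ae_eq_mk, TLdist_congr_ae hf₁.ae_eq_mk hf₃.ae_eq_mk,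
    TLdist_congr_ae hf₂.ae_eq_mk hf₃.ae_eq_mk]
  simp only [TLdist_eq_transportDist]
  exact transportDist_triangle (measurable_l2Graph hf₁.measurable_mk)
    (measurable_l2Graph hf₂.measurable_mk) (measurable_l2Graph hf₃.measurable_mk)

theorem TLdist_eq_zero_iff [SecondCountableTopology M] [BorelSpace M] {θ₁ θ₂ : Measure M}
    [IsProbabilityMeasure θ₁] [IsProbabilityMeasure θ₂] {f₁ f₂ : M → ℝ}
    (hf₁ : AEMeasurable f₁ θ₁) (hf₂ : AEMeasurable f₂ θ₂) :
    TLdist θ₁ θ₂ f₁ f₂ = 0 ↔ θ₁ = θ₂ ∧ f₁ =ᵐ[θ₁] f₂ := by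
  rw [TLdist_congr_ae hf₁.ae_eq_mk hf₂.ae_eq_mk, TLdist_eq_transportDist]
  have hg₁ := measurable_l2Graph hf₁.measurable_mk
  have hg₂ := measurable_l2Graph hf₂.measurable_mk
  constructor
  · intro h
    obtain ⟨rfl, h⟩ := eq_and_ae_eq_of_map_l2Graph_eq hf₁.measurable_mk hf₂.measurable_mk
      (map_eq_map_of_transportDist_eq_zero hg₁ hg₂ h)
    exact ⟨rfl, hf₁.ae_eq_mk.trans (h.trans hf₂.ae_eq_mk.symm)⟩
  · rintro ⟨rfl, h⟩
    exact transportDist_eq_zero_of_ae_eq hg₁ hg₂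
      (l2Graph_congr_ae (hf₁.ae_eq_mk.symm.trans (h.trans hf₂.ae_eq_mk)))

end TL

theorem TLdist_is_metric_general
    {M : Type*} [MetricSpace M] [CompactSpace M] [MeasurableSpace M] [BorelSpace M]
    (θ₁ θ₂ θ₃ : Measure M)
    [IsProbabilityMeasure θ₁] [IsProbabilityMeasure θ₂]
    (f₁ f₂ f₃ : M → ℝ)
    (hf₁ : MemLp f₁ 2 θ₁) (hf₂ : MemLp f₂ 2 θ₂) (hf₃ : MemLp f₃ 2 θ₃) :
    TLdist θ₁ θ₂ f₁ f₂ = TLdist θ₂ θ₁ f₂ f₁ ∧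
    TLdist θ₁ θ₃ f₁ f₃ ≤ TLdist θ₁ θ₂ f₁ f₂ + TLdist θ₂ θ₃ f₂ f₃ ∧
    (TLdist θ₁ θ₂ f₁ f₂ = 0 ↔ θ₁ = θ₂ ∧ f₁ =ᵐ[θ₁] f₂) :=
  ⟨TLdist_comm θ₁ θ₂ f₁ f₂,
    TLdist_triangle hf₁.aemeasurable hf₂.aemeasurable hf₃.aemeasurable,
    TLdist_eq_zero_iff hf₁.aemeasurable hf₂.aemeasurable⟩

/-- The `TL²` distance is a metric on pairs `(θ, f)` with `θ` a Borel probability measure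
on a compact metric space (e.g. a compact Riemannian manifold with its geodesic distance)
and `f ∈ L²(θ)`: it is symmetric, satisfies the triangle inequality, and vanishes exactly
when the two pairs coincide (the functions agreeing almost everywhere). -/
theorem TLdist_is_metric
    {M : Type*} [MetricSpace M] [CompactSpace M] [MeasurableSpace M] [BorelSpace M]
    (θ₁ θ₂ θ₃ : Measure M)
    [IsProbabilityMeasure θ₁] [IsProbabilityMeasure θ₂] [IsProbabilityMeasure θ₃]
    (f₁ f₂ f₃ : M → ℝ)
    (hf₁ : MemLp f₁ 2 θ₁) (hf₂ : MemLp f₂ 2 θ₂) (hf₃ : MemLp f₃ 2 θ₃) :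
    TLdist θ₁ θ₂ f₁ f₂ = TLdist θ₂ θ₁ f₂ f₁ ∧
    TLdist θ₁ θ₃ f₁ f₃ ≤ TLdist θ₁ θ₂ f₁ f₂ + TLdist θ₂ θ₃ f₂ f₃ ∧
    (TLdist θ₁ θ₂ f₁ f₂ = 0 ↔ θ₁ = θ₂ ∧ f₁ =ᵐ[θ₁] f₂) :=
  TLdist_is_metric_general θ₁ θ₂ θ₃ f₁ f₂ f₃ hf₁ hf₂ hf₃
end

section
/- Continuity of inner products under TL² convergence: if (θ_n, f_n) → (θ, f) and (θ_n, g_n) → (θ, g) in the TL² metric, then the inner products converge: ∫_M f_n g_n dθ_n → ∫_M f g dθ. -/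
/-!
Choose couplings `ω n` of `θ n` and `θlim` whose transport cost tends to zero and along which
`f n x - flim y → 0` in `L²(ω n)`; those for `g` may be other couplings `σ n`. Gluing `ω n` and
`σ n` along their common marginal `θ n` yields couplings of `θlim` with itself of vanishing cost,
and along such couplings `glim y - glim z → 0` in `L²` (approximate `glim` in `L²(θlim)` by a
continuous function, which is uniformly continuous as `M` is compact). Hence also
`g n x - glim y → 0` in `L²(ω n)`. Both integrals are integrals against `ω n`, of
`f n x * g n x` and of `flim y * glim y`, so Cauchy–Schwarz in `L²(ω n)` bounds their difference.
-/

open MeasureTheory Filter Topology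
open scoped ENNReal

open ProbabilityTheory

section L2

variable {α : Type*} [MeasurableSpace α]

lemma abs_integral_mul_le_eLpNorm_mul_eLpNorm {μ : Measure α} {F G : α → ℝ}
    (hF : MemLp F 2 μ) (hG : MemLp G 2 μ) :
    |∫ x, F x * G x ∂μ| ≤ (eLpNorm F 2 μ).toReal * (eLpNorm G 2 μ).toReal := by
  have h_inner : ∫ x, F x * G x ∂μ = inner ℝ (hF.toLp F) (hG.toLp G) := by
    rw [L2.inner_def]
    refine integral_congr_ae ?_
    filter_upwards [hF.coeFn_toLp, hG.coeFn_toLp] with x hFx hGx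
    simp [hFx, hGx, mul_comm]
  rw [h_inner, ← Lp.norm_toLp F hF, ← Lp.norm_toLp G hG]
  exact abs_real_inner_le_norm _ _

lemma abs_integral_mul_sub_integral_mul_le {μ : Measure α} {F G F' G' : α → ℝ}
    (hF : MemLp F 2 μ) (hG : MemLp G 2 μ) (hF' : MemLp F' 2 μ) (hG' : MemLp G' 2 μ) :
    |∫ x, F x * G x ∂μ - ∫ x, F' x * G' x ∂μ| ≤
      (eLpNorm (F - F') 2 μ).toReal * ((eLpNorm G' 2 μ).toReal + (eLpNorm (G - G') 2 μ).toReal)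
        + (eLpNorm F' 2 μ).toReal * (eLpNorm (G - G') 2 μ).toReal := by
  have h_split : ∫ x, F x * G x ∂μ - ∫ x, F' x * G' x ∂μ =
      ∫ x, (F - F') x * G x ∂μ + ∫ x, F' x * (G - G') x ∂μ := by
    have h₁ : Integrable (fun x => F x * G x) μ := hF.integrable_mul hG
    have h₂ : Integrable (fun x => F' x * G' x) μ := hF'.integrable_mul hG'
    have h₃ : Integrable (fun x => (F - F') x * G x) μ := (hF.sub hF').integrable_mul hG
    have h₄ : Integrable (fun x => F' x * (G - G') x) μ := hF'.integrable_mul (hG.sub hG')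
    rw [← integral_sub h₁ h₂, ← integral_add h₃ h₄]
    congr 1 with x
    simp only [Pi.sub_apply]
    ring
  have hG_le : (eLpNorm G 2 μ).toReal ≤
      (eLpNorm G' 2 μ).toReal + (eLpNorm (G - G') 2 μ).toReal := by
    have hG'_fin := hG'.eLpNorm_ne_top
    have hGG'_fin := (hG.sub hG').eLpNorm_ne_top
    rw [← ENNReal.toReal_add hG'_fin hGG'_fin]
    refine ENNReal.toReal_mono (ENNReal.add_ne_top.mpr ⟨hG'_fin, hGG'_fin⟩) ?_
    simpa using eLpNorm_add_le hG'.1 (hG.sub hG').1 one_le_two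
  rw [h_split]
  refine (abs_add_le _ _).trans (add_le_add ?_ ?_)
  · exact (abs_integral_mul_le_eLpNorm_mul_eLpNorm (hF.sub hF') hG).trans
      (mul_le_mul_of_nonneg_left hG_le ENNReal.toReal_nonneg)
  · exact abs_integral_mul_le_eLpNorm_mul_eLpNorm hF' (hG.sub hG')

lemma eLpNorm_two_le_of_sq_le {μ : Measure α} {u c : α → ℝ} (h : ∀ x, u x ^ 2 ≤ c x) :
    eLpNorm u 2 μ ≤ (∫⁻ x, ENNReal.ofReal (c x) ∂μ) ^ (1 / 2 : ℝ) := by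
  rw [eLpNorm_eq_lintegral_rpow_enorm_toReal two_ne_zero ENNReal.ofNat_ne_top]
  simp only [ENNReal.toReal_ofNat]
  gcongr with x
  rw [Real.enorm_eq_ofReal_abs, ENNReal.ofReal_rpow_of_nonneg (abs_nonneg _) zero_le_two]
  exact ENNReal.ofReal_le_ofReal (by simpa using h x)

end L2

lemma MeasureTheory.MeasurePreserving.integral_comp_of_aestronglyMeasurable
    {α β G : Type*} [MeasurableSpace α] [MeasurableSpace β] [NormedAddCommGroup G]
    [NormedSpace ℝ G] {μ : Measure α} {ν : Measure β} {f : α → β} (hf : MeasurePreserving f μ ν) {g : β → G}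
    (hg : AEStronglyMeasurable g ν) : ∫ x, g (f x) ∂μ = ∫ y, g y ∂ν := by
  rw [← hf.map_eq] at hg ⊢
  exact (integral_map hf.aemeasurable hg).symm

lemma ENNReal.tendsto_nhds_zero_of_le_ofReal_add_mul {ι : Type*} {l : Filter ι}
    {a b : ι → ℝ≥0∞} (hb : Tendsto b l (𝓝 0))
    (h : ∀ r : ℝ, 0 < r → ∃ C ≠ ∞, ∀ i, a i ≤ ENNReal.ofReal r + C * b i) :
    Tendsto a l (𝓝 0) := by
  rw [ENNReal.tendsto_nhds_zero]
  intro ε hε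
  obtain ⟨r, -, hr, hrε⟩ := ENNReal.lt_iff_exists_real_btwn.mp (ENNReal.half_pos hε.ne')
  obtain ⟨C, hC, hab⟩ := h r (ENNReal.ofReal_pos.mp hr)
  have hCb : Tendsto (fun i => C * b i) l (𝓝 0) := by
    simpa using ENNReal.Tendsto.const_mul hb (Or.inr hC)
  filter_upwards [ENNReal.tendsto_nhds_zero.mp hCb (ε / 2) (ENNReal.half_pos hε.ne')] with i hi
  calc a i ≤ ENNReal.ofReal r + C * b i := hab i
    _ ≤ ε / 2 + ε / 2 := add_le_add hrε.le hi
    _ = ε := ENNReal.add_halves ε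

lemma UniformContinuous.exists_dist_le_add_mul_dist {α β : Type*} [PseudoMetricSpace α]
    [PseudoMetricSpace β] {φ : α → β} (hφ : UniformContinuous φ) {C : ℝ}
    (hC : ∀ x y, dist (φ x) (φ y) ≤ C) {r : ℝ} (hr : 0 < r) :
    ∃ K, ∀ x y, dist (φ x) (φ y) ≤ r + K * dist x y := by
  obtain ⟨δ, hδ, hφδ⟩ := Metric.uniformContinuous_iff.mp hφ r hr
  refine ⟨C / δ, fun x y => ?_⟩
  have hC₀ : 0 ≤ C := dist_self (φ x) ▸ hC x x
  rcases lt_or_ge (dist x y) δ with hxy | hxy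
  · exact (hφδ hxy).le.trans (le_add_of_nonneg_right (by positivity))
  · calc dist (φ x) (φ y) ≤ C / δ * δ := by rw [div_mul_cancel₀ C hδ.ne']; exact hC x y
      _ ≤ r + C / δ * dist x y := by
        nlinarith [div_nonneg hC₀ hδ.le]

section Coupling

variable {α β : Type*} [MeasurableSpace α] [MeasurableSpace β]

def IsCoupling (ω : Measure (α × β)) (μ : Measure α) (ν : Measure β) : Prop :=
  ω.map Prod.fst = μ ∧ ω.map Prod.snd = ν

namespace IsCoupling

variable {ω : Measure (α × β)} {μ : Measure α} {ν : Measure β}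

lemma measurePreserving_fst (h : IsCoupling ω μ ν) : MeasurePreserving Prod.fst ω μ :=
  ⟨measurable_fst, h.1⟩

lemma measurePreserving_snd (h : IsCoupling ω μ ν) : MeasurePreserving Prod.snd ω ν :=
  ⟨measurable_snd, h.2⟩

lemma isProbabilityMeasure [IsProbabilityMeasure μ] (h : IsCoupling ω μ ν) :
    IsProbabilityMeasure ω :=
  have : IsProbabilityMeasure (ω.map Prod.fst) := h.1 ▸ ‹_›
  Measure.isProbabilityMeasure_of_map Prod.fst

lemma aestronglyMeasurable_sub (h : IsCoupling ω μ ν) {u : α → ℝ} {v : β → ℝ}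
    (hu : AEStronglyMeasurable u μ) (hv : AEStronglyMeasurable v ν) :
    AEStronglyMeasurable (fun p => u p.1 - v p.2) ω :=
  (hu.comp_measurePreserving h.measurePreserving_fst).sub
    (hv.comp_measurePreserving h.measurePreserving_snd)

end IsCoupling

lemma isCoupling_prod (μ : Measure α) (ν : Measure β) [IsProbabilityMeasure μ]
    [IsProbabilityMeasure ν] : IsCoupling (μ.prod ν) μ ν :=
  ⟨Measure.fst_prod, Measure.snd_prod⟩

lemma eLpNorm_comp_fst_sub_comp_snd_le {γ : Measure (α × α)} {μ : Measure α}
    (hγ : IsCoupling γ μ μ) {u : α → ℝ} (hu : AEStronglyMeasurable u μ) {p : ℝ≥0∞}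
    (hp : 1 ≤ p) : eLpNorm (fun q => u q.1 - u q.2) p γ ≤ 2 * eLpNorm u p μ := by
  calc eLpNorm (fun q => u q.1 - u q.2) p γ
      ≤ eLpNorm (u ∘ Prod.fst) p γ + eLpNorm (u ∘ Prod.snd) p γ :=
        eLpNorm_sub_le (hu.comp_measurePreserving hγ.measurePreserving_fst)
          (hu.comp_measurePreserving hγ.measurePreserving_snd) hp
    _ = 2 * eLpNorm u p μ := by
        rw [eLpNorm_comp_measurePreserving hu hγ.measurePreserving_fst,
          eLpNorm_comp_measurePreserving hu hγ.measurePreserving_snd, two_mul]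

lemma exists_gluing {γ : Type*} [StandardBorelSpace β] [Nonempty β] [MeasurableSpace γ]
    [StandardBorelSpace γ] [Nonempty γ] (ω : Measure (α × β)) (σ : Measure (α × γ))
    [IsFiniteMeasure ω] [IsFiniteMeasure σ] (h : ω.fst = σ.fst) :
    ∃ τ : Measure (α × β × γ), MeasurePreserving (fun p => (p.1, p.2.1)) τ ω ∧
      MeasurePreserving (fun p => (p.1, p.2.2)) τ σ := by
  refine ⟨ω.fst ⊗ₘ (ω.condKernel ×ₖ σ.condKernel), ⟨by fun_prop, ?_⟩, ⟨by fun_prop, ?_⟩⟩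
  · change (_ ⊗ₘ _).map (Prod.map id Prod.fst) = ω
    rw [← Measure.compProd_map measurable_fst, ← Kernel.fst_eq, Kernel.fst_prod,
      ω.disintegrate]
  · change (_ ⊗ₘ _).map (Prod.map id Prod.snd) = σ
    rw [← Measure.compProd_map measurable_snd, ← Kernel.snd_eq, Kernel.snd_prod, h,
      σ.disintegrate]

lemma isCoupling_map_of_gluing {γ : Type*} [MeasurableSpace γ] {τ : Measure (α × β × γ)}
    {ω : Measure (α × β)} {σ : Measure (α × γ)} {μ : Measure α} {ν : Measure β}
    {ν' : Measure γ} (hω : IsCoupling ω μ ν) (hσ : IsCoupling σ μ ν')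
    (hτω : MeasurePreserving (fun p => (p.1, p.2.1)) τ ω)
    (hτσ : MeasurePreserving (fun p => (p.1, p.2.2)) τ σ) :
    IsCoupling (τ.map fun p => (p.2.2, p.2.1)) ν' ν := by
  constructor
  · rw [Measure.map_map measurable_fst (by fun_prop)]
    exact (hσ.measurePreserving_snd.comp hτσ).map_eq
  · rw [Measure.map_map measurable_snd (by fun_prop)]
    exact (hω.measurePreserving_snd.comp hτω).map_eq

lemma eLpNorm_sub_le_of_gluing {τ : Measure (α × β × β)} {ω σ : Measure (α × β)}
    {μ : Measure α} {ν : Measure β} (hω : IsCoupling ω μ ν) (hσ : IsCoupling σ μ ν)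
    (hτω : MeasurePreserving (fun p => (p.1, p.2.1)) τ ω)
    (hτσ : MeasurePreserving (fun p => (p.1, p.2.2)) τ σ) {u : α → ℝ} {v : β → ℝ}
    (hu : AEStronglyMeasurable u μ) (hv : AEStronglyMeasurable v ν) {p : ℝ≥0∞} (hp : 1 ≤ p) :
    eLpNorm (fun q => u q.1 - v q.2) p ω ≤ eLpNorm (fun q => u q.1 - v q.2) p σ +
      eLpNorm (fun q => v q.1 - v q.2) p (τ.map fun q => (q.2.2, q.2.1)) := by
  have hγ := isCoupling_map_of_gluing hω hσ hτω hτσ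
  rw [← eLpNorm_comp_measurePreserving (hω.aestronglyMeasurable_sub hu hv) hτω,
    ← eLpNorm_comp_measurePreserving (hσ.aestronglyMeasurable_sub hu hv) hτσ,
    ← eLpNorm_comp_measurePreserving (hγ.aestronglyMeasurable_sub hv hv) ⟨by fun_prop, rfl⟩]
  have hsplit : ((fun q => u q.1 - v q.2) ∘ fun q : α × β × β => (q.1, q.2.1)) =
      ((fun q => u q.1 - v q.2) ∘ fun q => (q.1, q.2.2)) +
        (fun q => v q.1 - v q.2) ∘ fun q => (q.2.2, q.2.1) := by
    ext q
    simp only [Function.comp_apply, Pi.add_apply]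
    ring
  rw [hsplit]
  exact eLpNorm_add_le ((hσ.aestronglyMeasurable_sub hu hv).comp_measurePreserving hτσ)
    ((hγ.aestronglyMeasurable_sub hv hv).comp_measurePreserving ⟨by fun_prop, rfl⟩) hp

lemma tendsto_integral_mul_of_isCoupling {θ : ℕ → Measure α} {θlim : Measure β}
    {ω : ℕ → Measure (α × β)} (hω : ∀ n, IsCoupling (ω n) (θ n) θlim)
    {f g : ℕ → α → ℝ} {flim glim : β → ℝ}
    (hf : ∀ n, MemLp (f n) 2 (θ n)) (hg : ∀ n, MemLp (g n) 2 (θ n))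
    (hflim : MemLp flim 2 θlim) (hglim : MemLp glim 2 θlim)
    (hfω : Tendsto (fun n => eLpNorm (fun p => f n p.1 - flim p.2) 2 (ω n)) atTop (𝓝 0))
    (hgω : Tendsto (fun n => eLpNorm (fun p => g n p.1 - glim p.2) 2 (ω n)) atTop (𝓝 0)) :
    Tendsto (fun n => ∫ x, f n x * g n x ∂θ n) atTop (𝓝 (∫ x, flim x * glim x ∂θlim)) := by
  set a := fun n => (eLpNorm (fun p => f n p.1 - flim p.2) 2 (ω n)).toReal
  set b := fun n => (eLpNorm (fun p => g n p.1 - glim p.2) 2 (ω n)).toReal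
  have hbound : ∀ n, dist (∫ x, f n x * g n x ∂θ n) (∫ x, flim x * glim x ∂θlim) ≤
      a n * ((eLpNorm glim 2 θlim).toReal + b n) + (eLpNorm flim 2 θlim).toReal * b n := by
    intro n
    have h₁ := (hω n).measurePreserving_fst
    have h₂ := (hω n).measurePreserving_snd
    rw [Real.dist_eq,
      ← h₁.integral_comp_of_aestronglyMeasurable (g := fun x => f n x * g n x)
        ((hf n).1.mul (hg n).1),
      ← h₂.integral_comp_of_aestronglyMeasurable (g := fun x => flim x * glim x)
        (hflim.1.mul hglim.1),
      ← eLpNorm_comp_measurePreserving hflim.1 h₂, ← eLpNorm_comp_measurePreserving hglim.1 h₂]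
    exact abs_integral_mul_sub_integral_mul_le ((hf n).comp_measurePreserving h₁)
      ((hg n).comp_measurePreserving h₁) (hflim.comp_measurePreserving h₂)
      (hglim.comp_measurePreserving h₂)
  have ha : Tendsto a atTop (𝓝 0) := (ENNReal.tendsto_toReal ENNReal.zero_ne_top).comp hfω
  have hb : Tendsto b atTop (𝓝 0) := (ENNReal.tendsto_toReal ENNReal.zero_ne_top).comp hgω
  rw [tendsto_iff_dist_tendsto_zero]
  refine squeeze_zero (fun _ => dist_nonneg) hbound ?_
  simpa using (ha.mul (hb.const_add _)).add (hb.const_mul _)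

end Coupling

section TransportCost

variable {M : Type*} [PseudoMetricSpace M] [MeasurableSpace M]

noncomputable def transportCost (ω : Measure (M × M)) : ℝ≥0∞ :=
  eLpNorm (fun p => dist p.1 p.2) 2 ω

lemma eLpNorm_comp_fst_sub_comp_snd_le_of_dist_le [OpensMeasurableSpace (M × M)]
    {γ : Measure (M × M)} [IsProbabilityMeasure γ] {φ : M → ℝ} {r K : ℝ} (hr : 0 ≤ r)
    (hφ : ∀ x y, dist (φ x) (φ y) ≤ r + K * dist x y) :
    eLpNorm (fun p => φ p.1 - φ p.2) 2 γ ≤ ENNReal.ofReal r + ‖K‖ₑ * transportCost γ := by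
  calc eLpNorm (fun p => φ p.1 - φ p.2) 2 γ
      ≤ eLpNorm ((fun _ : M × M => r) + fun p : M × M => K * dist p.1 p.2) 2 γ :=
        eLpNorm_mono_real fun p => by
          rw [Real.norm_eq_abs, ← Real.dist_eq]
          exact hφ p.1 p.2
    _ ≤ eLpNorm (fun _ : M × M => r) 2 γ + eLpNorm (fun p : M × M => K * dist p.1 p.2) 2 γ :=
        eLpNorm_add_le aestronglyMeasurable_const
          (continuous_const.mul (continuous_fst.dist continuous_snd)).aestronglyMeasurable
          one_le_two
    _ = ENNReal.ofReal r + ‖K‖ₑ * transportCost γ := by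
        rw [eLpNorm_const _ two_ne_zero (IsProbabilityMeasure.ne_zero γ), measure_univ,
          ENNReal.one_rpow, mul_one, Real.enorm_of_nonneg hr]
        exact congrArg _ (eLpNorm_const_smul K (fun p : M × M => dist p.1 p.2) 2 γ)

lemma tendsto_eLpNorm_comp_fst_sub_comp_snd [CompactSpace M] [BorelSpace M] {θ : Measure M}
    [IsProbabilityMeasure θ] {γ : ℕ → Measure (M × M)} (hγ : ∀ n, IsCoupling (γ n) θ θ)
    (hcost : Tendsto (fun n => transportCost (γ n)) atTop (𝓝 0)) {h : M → ℝ}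
    (hh : MemLp h 2 θ) :
    Tendsto (fun n => eLpNorm (fun p => h p.1 - h p.2) 2 (γ n)) atTop (𝓝 0) := by
  refine ENNReal.tendsto_nhds_zero_of_le_ofReal_add_mul hcost fun r hr => ?_
  obtain ⟨φ, hφ, -⟩ := hh.exists_boundedContinuous_eLpNorm_sub_le ENNReal.ofNat_ne_top
    (ENNReal.ofReal_pos.mpr (by positivity : 0 < r / 4)).ne'
  obtain ⟨C, hC⟩ := φ.bounded
  obtain ⟨K, hK⟩ := (CompactSpace.uniformContinuous_of_continuous φ.continuous)
    |>.exists_dist_le_add_mul_dist hC (half_pos hr)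
  refine ⟨‖K‖ₑ, enorm_ne_top, fun n => ?_⟩
  have := (hγ n).isProbabilityMeasure
  have hsplit : (fun p : M × M => h p.1 - h p.2) =
      (fun p => (h - ⇑φ) p.1 - (h - ⇑φ) p.2) + fun p => φ p.1 - φ p.2 := by
    ext p; simp only [Pi.add_apply, Pi.sub_apply]; ring
  have hhφ : AEStronglyMeasurable (h - ⇑φ) θ := hh.1.sub φ.continuous.aestronglyMeasurable
  calc eLpNorm (fun p => h p.1 - h p.2) 2 (γ n)
      ≤ eLpNorm (fun p => (h - ⇑φ) p.1 - (h - ⇑φ) p.2) 2 (γ n) +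
          eLpNorm (fun p => φ p.1 - φ p.2) 2 (γ n) := by
        rw [hsplit]
        exact eLpNorm_add_le ((hγ n).aestronglyMeasurable_sub hhφ hhφ) (by fun_prop) one_le_two
    _ ≤ 2 * ENNReal.ofReal (r / 4) + (ENNReal.ofReal (r / 2) + ‖K‖ₑ * transportCost (γ n)) :=
        add_le_add ((eLpNorm_comp_fst_sub_comp_snd_le (hγ n) hhφ one_le_two).trans (by gcongr))
          (eLpNorm_comp_fst_sub_comp_snd_le_of_dist_le (by positivity) hK)
    _ = ENNReal.ofReal r + ‖K‖ₑ * transportCost (γ n) := by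
        rw [← add_assoc, ← ENNReal.ofReal_ofNat 2, ← ENNReal.ofReal_mul zero_le_two,
          ← ENNReal.ofReal_add (by positivity) (by positivity)]
        ring_nf

lemma transportCost_map_le_of_gluing [OpensMeasurableSpace (M × M)] {τ : Measure (M × M × M)}
    {ω σ : Measure (M × M)}
    (hτω : MeasurePreserving (fun p => (p.1, p.2.1)) τ ω)
    (hτσ : MeasurePreserving (fun p => (p.1, p.2.2)) τ σ) :
    transportCost (τ.map fun p => (p.2.2, p.2.1)) ≤ transportCost σ + transportCost ω := by
  have hdist : Continuous fun p : M × M => dist p.1 p.2 := continuous_fst.dist continuous_snd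
  unfold transportCost
  rw [← eLpNorm_comp_measurePreserving hdist.aestronglyMeasurable ⟨by fun_prop, rfl⟩,
    ← eLpNorm_comp_measurePreserving hdist.aestronglyMeasurable hτσ,
    ← eLpNorm_comp_measurePreserving hdist.aestronglyMeasurable hτω]
  refine (eLpNorm_mono_real fun p => ?_).trans (eLpNorm_add_le ?_ ?_ one_le_two)
  · change |dist p.2.2 p.2.1| ≤ dist p.1 p.2.2 + dist p.1 p.2.1
    rw [abs_of_nonneg dist_nonneg]
    exact dist_triangle_left _ _ _
  · exact hdist.aestronglyMeasurable.comp_measurePreserving hτσ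
  · exact hdist.aestronglyMeasurable.comp_measurePreserving hτω

end TransportCost

section ChangeOfCoupling

variable {M : Type*} [MetricSpace M] [CompactSpace M] [MeasurableSpace M] [BorelSpace M]
  {θ : ℕ → Measure M} {θlim : Measure M} [∀ n, IsProbabilityMeasure (θ n)]
  [IsProbabilityMeasure θlim]

lemma tendsto_eLpNorm_sub_of_isCoupling {ω σ : ℕ → Measure (M × M)}
    (hω : ∀ n, IsCoupling (ω n) (θ n) θlim) (hσ : ∀ n, IsCoupling (σ n) (θ n) θlim)
    (hωcost : Tendsto (fun n => transportCost (ω n)) atTop (𝓝 0))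
    (hσcost : Tendsto (fun n => transportCost (σ n)) atTop (𝓝 0))
    {g : ℕ → M → ℝ} {glim : M → ℝ} (hg : ∀ n, AEStronglyMeasurable (g n) (θ n))
    (hglim : MemLp glim 2 θlim)
    (hσg : Tendsto (fun n => eLpNorm (fun p => g n p.1 - glim p.2) 2 (σ n)) atTop (𝓝 0)) :
    Tendsto (fun n => eLpNorm (fun p => g n p.1 - glim p.2) 2 (ω n)) atTop (𝓝 0) := by
  have := nonempty_of_isProbabilityMeasure θlim
  have := fun n => (hω n).isProbabilityMeasure
  have := fun n => (hσ n).isProbabilityMeasure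
  choose τ hτω hτσ using fun n => exists_gluing (ω n) (σ n) ((hω n).1.trans (hσ n).1.symm)
  have hγ n := isCoupling_map_of_gluing (hω n) (hσ n) (hτω n) (hτσ n)
  have hγcost : Tendsto (fun n => transportCost ((τ n).map fun p => (p.2.2, p.2.1))) atTop
      (𝓝 0) :=
    tendsto_of_tendsto_of_tendsto_of_le_of_le tendsto_const_nhds
      (by simpa using hσcost.add hωcost) (fun _ => zero_le)
      fun n => transportCost_map_le_of_gluing (hτω n) (hτσ n)
  refine tendsto_of_tendsto_of_tendsto_of_le_of_le tendsto_const_nhds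
    (by simpa using hσg.add (tendsto_eLpNorm_comp_fst_sub_comp_snd hγ hγcost hglim))
    (fun _ => zero_le) fun n =>
      eLpNorm_sub_le_of_gluing (hω n) (hσ n) (hτω n) (hτσ n) (hg n) hglim.1 one_le_two

end ChangeOfCoupling

section TLdist

variable {M : Type*} [MetricSpace M] [MeasurableSpace M]

lemma exists_isCoupling_le_TLdist_add (θ₁ θ₂ : Measure M) [IsProbabilityMeasure θ₁]
    [IsProbabilityMeasure θ₂] (f₁ f₂ : M → ℝ) {ε : ℝ≥0∞} (hε : ε ≠ 0) :
    ∃ ω, IsCoupling ω θ₁ θ₂ ∧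
      (∫⁻ p, ENNReal.ofReal (dist p.1 p.2 ^ 2 + |f₁ p.1 - f₂ p.2| ^ 2) ∂ω) ^ (1 / 2 : ℝ) ≤
        TLdist θ₁ θ₂ f₁ f₂ + ε := by
  by_cases htop : TLdist θ₁ θ₂ f₁ f₂ = ∞
  · exact ⟨θ₁.prod θ₂, isCoupling_prod θ₁ θ₂, by simp [htop]⟩
  · obtain ⟨ω, hlt⟩ := iInf_lt_iff.mp (ENNReal.lt_add_right htop hε)
    obtain ⟨hω, hlt⟩ := iInf_lt_iff.mp hlt
    exact ⟨ω, hω, hlt.le⟩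

lemma exists_isCoupling_tendsto_of_tendsto_TLdist {θ : ℕ → Measure M} {θlim : Measure M}
    [∀ n, IsProbabilityMeasure (θ n)] [IsProbabilityMeasure θlim] {f : ℕ → M → ℝ}
    {flim : M → ℝ} (h : Tendsto (fun n => TLdist (θ n) θlim (f n) flim) atTop (𝓝 0)) :
    ∃ ω : ℕ → Measure (M × M), (∀ n, IsCoupling (ω n) (θ n) θlim) ∧
      Tendsto (fun n => transportCost (ω n)) atTop (𝓝 0) ∧
      Tendsto (fun n => eLpNorm (fun p => f n p.1 - flim p.2) 2 (ω n)) atTop (𝓝 0) := by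
  choose ω hω hle using fun n : ℕ => exists_isCoupling_le_TLdist_add (θ n) θlim (f n) flim
    (ENNReal.inv_ne_zero.mpr (ENNReal.natCast_ne_top n))
  have hbound : Tendsto (fun n : ℕ => TLdist (θ n) θlim (f n) flim + (n : ℝ≥0∞)⁻¹) atTop
      (𝓝 0) := by
    simpa using h.add ENNReal.tendsto_inv_nat_nhds_zero
  refine ⟨ω, hω, ?_, ?_⟩ <;>
    refine tendsto_of_tendsto_of_tendsto_of_le_of_le tendsto_const_nhds hbound
      (fun _ => zero_le) fun n => (eLpNorm_two_le_of_sq_le fun p => ?_).trans (hle n)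
  · rw [sq_abs]; exact le_add_of_nonneg_right (sq_nonneg _)
  · rw [← sq_abs]; exact le_add_of_nonneg_left (sq_nonneg _)

end TLdist

/-- Continuity of inner products under `TL²` convergence: if `(θ_n, f_n) → (θ, f)` and
`(θ_n, g_n) → (θ, g)` in `TL²`, then `∫ f_n g_n dθ_n → ∫ f g dθ`. -/
theorem inner_product_continuous_under_TL2_convergence
    {M : Type*} [MetricSpace M] [CompactSpace M] [MeasurableSpace M] [BorelSpace M]
    (θ : ℕ → Measure M) (θlim : Measure M)
    [∀ n, IsProbabilityMeasure (θ n)] [IsProbabilityMeasure θlim]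
    (f g : ℕ → M → ℝ) (flim glim : M → ℝ)
    (hf : ∀ n, MemLp (f n) 2 (θ n)) (hg : ∀ n, MemLp (g n) 2 (θ n))
    (hflim : MemLp flim 2 θlim) (hglim : MemLp glim 2 θlim)
    (hfconv : Tendsto (fun n => TLdist (θ n) θlim (f n) flim) atTop (𝓝 0))
    (hgconv : Tendsto (fun n => TLdist (θ n) θlim (g n) glim) atTop (𝓝 0)) :
    Tendsto (fun n => ∫ x, f n x * g n x ∂(θ n)) atTop
      (𝓝 (∫ x, flim x * glim x ∂θlim)) := by
  obtain ⟨ω, hω, hωcost, hfω⟩ := exists_isCoupling_tendsto_of_tendsto_TLdist hfconv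
  obtain ⟨σ, hσ, hσcost, hgσ⟩ := exists_isCoupling_tendsto_of_tendsto_TLdist hgconv
  have hgω := tendsto_eLpNorm_sub_of_isCoupling hω hσ hωcost hσcost (fun n => (hg n).1) hglim hgσ
  exact tendsto_integral_mul_of_isCoupling hω hf hg hflim hglim hfω hgω
end
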